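/- arXiv:1803.09532 — 2 statements merged into one kernel-verified Lean document; each statement's English description precedes it below -/
import Mathlib

section
/- Let ℓ > 0 and α > 0. The functions φ_n are eigenfunctions with eigenvalues λ_n of the Gaussian-kernel integral operator with respect to μ_α: for every integer n ≥ 0 and every real x, ∫_ℝ exp(−(x−y)²/(2ℓ²))·φ_n(y) dμ_α(y) = λ_n·φ_n(x). -/
/-!
Completing the square, the kernel integral of `φ n` is `exp (-ε² x²)` times
`∫ H n (c y) exp (-A y² + B y) dy` with `A = α² + δ² + ε²`, `B = 2 ε² x`, `c = √2 α β`.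
Gaussian integration by parts, `2A ∫ y p(y) e^{…} = ∫ (p' + B p) e^{…}`, together with the
recurrence `H (n+2) x = x H (n+1) x - (n+1) H n x`, shows by induction on `n` that this integral
is `√(π/A) exp (B²/4A) rⁿ H n w` as soon as `c² = 2A (1 - r²)` and `c B = 2A r w`.
For `r = ε²/A` and `w = c x` both conditions reduce to the relation `δ⁴ + α² δ² = α² ε²`
encoded in the definition of `β`, which also turns the prefactor into `λ n exp (-δ² x²)`.
-/

/-- Probabilists' Hermite polynomial evaluated at a real number. -/
noncomputable def H (n : ℕ) (x : ℝ) : ℝ := Polynomial.aeval x (Polynomial.hermite n)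

open Real MeasureTheory Polynomial

namespace Polynomial

theorem derivative_hermite_succ (n : ℕ) :
    derivative (hermite (n + 1)) = (n + 1 : ℤ[X]) * hermite n := by
  induction n with
  | zero => simp
  | succ n ih =>
    rw [hermite_succ (n + 1), derivative_sub, derivative_mul, derivative_X, ih, derivative_mul,
      hermite_succ n, derivative_add, derivative_natCast, derivative_one]
    push_cast
    ring

theorem hermite_succ_succ (n : ℕ) :
    hermite (n + 2) = X * hermite (n + 1) - (n + 1 : ℤ[X]) * hermite n := by
  rw [hermite_succ (n + 1), derivative_hermite_succ]

end Polynomial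

theorem H_zero (x : ℝ) : H 0 x = 1 := by simp [H]

theorem H_one (x : ℝ) : H 1 x = x := by simp [H]

theorem H_succ_succ (n : ℕ) (x : ℝ) :
    H (n + 2) x = x * H (n + 1) x - (n + 1) * H n x := by
  rw [H, hermite_succ_succ]
  simp [H]

noncomputable def scaledHermite (c : ℝ) (n : ℕ) : ℝ[X] :=
  ((hermite n).map (Int.castRingHom ℝ)).comp (C c * X)

theorem eval_scaledHermite (c : ℝ) (n : ℕ) (y : ℝ) :
    (scaledHermite c n).eval y = H n (c * y) := by
  simp [scaledHermite, H, aeval_def, eval₂_eq_eval_map]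

theorem scaledHermite_zero (c : ℝ) : scaledHermite c 0 = 1 := by simp [scaledHermite]

theorem scaledHermite_one (c : ℝ) : scaledHermite c 1 = C c * X := by simp [scaledHermite]

theorem scaledHermite_succ_succ (c : ℝ) (n : ℕ) :
    scaledHermite c (n + 2) =
      C c * (X * scaledHermite c (n + 1)) - C ((n : ℝ) + 1) * scaledHermite c n := by
  simp only [scaledHermite, hermite_succ_succ]
  simp [mul_comp, mul_assoc]

theorem derivative_scaledHermite_succ (c : ℝ) (n : ℕ) :
    derivative (scaledHermite c (n + 1)) = C (c * ((n : ℝ) + 1)) * scaledHermite c n := by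
  rw [scaledHermite, scaledHermite, derivative_comp, derivative_map, derivative_hermite_succ]
  simp only [derivative_mul, derivative_C, derivative_X, Polynomial.map_mul, Polynomial.map_add,
    Polynomial.map_natCast, Polynomial.map_one, mul_comp, add_comp, natCast_comp, one_comp, map_mul,
    map_add, map_natCast, map_one]
  ring

section GaussianPairing

variable {a : ℝ} (b : ℝ)

theorem neg_mul_sq_add_mul_eq (ha : a ≠ 0) (y : ℝ) :
    -(a * y ^ 2) + b * y = -(a * (y - b / (2 * a)) ^ 2) + b ^ 2 / (4 * a) := by
  field_simp
  ring

theorem integral_exp_neg_mul_sq_add_mul (ha : 0 < a) :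
    ∫ y, exp (-(a * y ^ 2) + b * y) = √(π / a) * exp (b ^ 2 / (4 * a)) := by
  simp_rw [neg_mul_sq_add_mul_eq b ha.ne', exp_add]
  rw [integral_mul_const, integral_sub_right_eq_self (fun y ↦ exp (-(a * y ^ 2))),
    ← integral_gaussian]
  simp_rw [neg_mul]

theorem integrable_eval_mul_exp_neg_mul_sq (ha : 0 < a) (p : ℝ[X]) :
    Integrable fun y ↦ p.eval y * exp (-(a * y ^ 2)) := by
  simp_rw [eval_eq_sum_range, Finset.sum_mul, mul_assoc]
  refine integrable_finsetSum _ fun i _ ↦ Integrable.const_mul ?_ _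
  have := integrable_rpow_mul_exp_neg_mul_sq ha (s := i) (by linarith [i.cast_nonneg (α := ℝ)])
  simp_rw [rpow_natCast, neg_mul] at this
  exact this

theorem integrable_eval_mul_exp_neg_mul_sq_add_mul (ha : 0 < a) (p : ℝ[X]) :
    Integrable fun y ↦ p.eval y * exp (-(a * y ^ 2) + b * y) := by
  set s := b / (2 * a)
  have h := ((integrable_eval_mul_exp_neg_mul_sq ha (p.comp (X + C s))).comp_sub_right s).mul_const
    (exp (b ^ 2 / (4 * a)))
  refine h.congr (ae_of_all _ fun y ↦ ?_)
  simp only [neg_mul_sq_add_mul_eq b ha.ne', exp_add, eval_comp, eval_add, eval_X, eval_C,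
    sub_add_cancel, mul_assoc, s]

noncomputable def gaussianPairing (ha : 0 < a) : ℝ[X] →ₗ[ℝ] ℝ where
  toFun p := ∫ y, p.eval y * exp (-(a * y ^ 2) + b * y)
  map_add' p q := by
    simp only [eval_add, add_mul]
    exact integral_add (integrable_eval_mul_exp_neg_mul_sq_add_mul b ha p)
      (integrable_eval_mul_exp_neg_mul_sq_add_mul b ha q)
  map_smul' c p := by
    simp only [eval_smul, smul_eq_mul, mul_assoc, integral_const_mul, RingHom.id_apply]

variable (ha : 0 < a)

theorem gaussianPairing_apply (p : ℝ[X]) :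
    gaussianPairing b ha p = ∫ y, p.eval y * exp (-(a * y ^ 2) + b * y) := rfl

theorem gaussianPairing_one : gaussianPairing b ha 1 = √(π / a) * exp (b ^ 2 / (4 * a)) := by
  simp only [gaussianPairing_apply, eval_one, one_mul, integral_exp_neg_mul_sq_add_mul b ha]

theorem two_mul_gaussianPairing_X_mul (p : ℝ[X]) :
    2 * a * gaussianPairing b ha (X * p) =
      gaussianPairing b ha (derivative p) + b * gaussianPairing b ha p := by
  have hderiv (y : ℝ) : HasDerivAt (fun y ↦ p.eval y * exp (-(a * y ^ 2) + b * y))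
      ((derivative p + C b * p - C (2 * a) * (X * p)).eval y * exp (-(a * y ^ 2) + b * y)) y := by
    have hq : HasDerivAt (fun y ↦ -(a * y ^ 2) + b * y) (b - 2 * a * y) y :=
      (((hasDerivAt_pow 2 y).const_mul a).fun_neg.fun_add
        ((hasDerivAt_id' y).const_mul b)).congr_deriv (by ring)
    refine ((p.hasDerivAt y).fun_mul hq.exp).congr_deriv ?_
    simp only [eval_add, eval_sub, eval_mul, eval_C, eval_X]
    ring
  have h := integral_eq_zero_of_hasDerivAt_of_integrable hderiv
    (integrable_eval_mul_exp_neg_mul_sq_add_mul b ha _)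
    (integrable_eval_mul_exp_neg_mul_sq_add_mul b ha p)
  rw [← gaussianPairing_apply b ha, map_sub, map_add, C_mul', C_mul', map_smul, map_smul] at h
  simp only [smul_eq_mul] at h
  linarith

end GaussianPairing

theorem gaussianPairing_scaledHermite {a : ℝ} (ha : 0 < a) (b : ℝ) {c r w : ℝ}
    (hc : c ^ 2 = 2 * a * (1 - r ^ 2)) (hw : c * b = 2 * a * (r * w)) (n : ℕ) :
    gaussianPairing b ha (scaledHermite c n) =
      √(π / a) * exp (b ^ 2 / (4 * a)) * (r ^ n * H n w) := by
  set G := √(π / a) * exp (b ^ 2 / (4 * a))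
  have h2a : 2 * a ≠ 0 := by positivity
  induction n using Nat.twoStepInduction with
  | zero => simp [scaledHermite_zero, gaussianPairing_one, H_zero, G]
  | one =>
    have hX := two_mul_gaussianPairing_X_mul b ha 1
    rw [mul_one, derivative_one, map_zero, gaussianPairing_one] at hX
    rw [scaledHermite_one, C_mul', map_smul, smul_eq_mul, H_one]
    apply mul_left_cancel₀ h2a
    linear_combination c * hX + G * hw
  | more k ih₀ ih₁ =>
    have hX := two_mul_gaussianPairing_X_mul b ha (scaledHermite c (k + 1))
    rw [derivative_scaledHermite_succ, C_mul', map_smul, smul_eq_mul, ih₀, ih₁] at hX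
    rw [scaledHermite_succ_succ, map_sub, C_mul', C_mul', map_smul, map_smul, smul_eq_mul,
      smul_eq_mul, ih₀, H_succ_succ]
    apply mul_left_cancel₀ h2a
    linear_combination c * hX + ((k + 1) * G * r ^ k * H k w) * hc +
      (G * r ^ (k + 1) * H (k + 1) w) * hw

theorem integral_gaussianKernel_mul_eigenfunction {α ε δ2 c : ℝ} (hα : 0 < α)
    (hδ2 : δ2 ^ 2 + α ^ 2 * δ2 = α ^ 2 * ε ^ 2) (hc : c ^ 2 = 2 * (α ^ 2 + 2 * δ2))
    (n : ℕ) (x : ℝ) :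
    ∫ y, exp (-(ε ^ 2 * (x - y) ^ 2)) * (exp (-δ2 * y ^ 2) * H n (c * y)) *
        (α / √π * exp (-(α ^ 2 * y ^ 2))) =
      √(α ^ 2 / (α ^ 2 + δ2 + ε ^ 2)) * (ε ^ 2 / (α ^ 2 + δ2 + ε ^ 2)) ^ n *
        (exp (-δ2 * x ^ 2) * H n (c * x)) := by
  -- `hc` forces `δ2 > -α ^ 2`, and then `hδ2` forces `δ2 ≥ 0`.
  have hδ2_nonneg : 0 ≤ δ2 := by nlinarith [sq_nonneg c, sq_nonneg ε, sq_nonneg α]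
  have hA : 0 < α ^ 2 + δ2 + ε ^ 2 := by positivity
  set A := α ^ 2 + δ2 + ε ^ 2
  have hcA : c ^ 2 = 2 * A * (1 - (ε ^ 2 / A) ^ 2) := by
    field_simp
    linear_combination A * hc + 2 * hδ2
  have hw : c * (2 * ε ^ 2 * x) = 2 * A * (ε ^ 2 / A * (c * x)) := by
    field_simp
  have hexp : -(ε ^ 2 * x ^ 2) + (2 * ε ^ 2 * x) ^ 2 / (4 * A) = -δ2 * x ^ 2 := by
    field_simp
    linear_combination 4 * x ^ 2 * hδ2
  have hconst : α / √π * √(π / A) = √(α ^ 2 / A) := by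
    rw [sqrt_div' _ hA.le, sqrt_div' _ hA.le, sqrt_sq hα.le]
    field_simp
  calc _ = α / √π * exp (-(ε ^ 2 * x ^ 2)) *
        gaussianPairing (2 * ε ^ 2 * x) hA (scaledHermite c n) := by
        rw [gaussianPairing_apply, ← integral_const_mul]
        congr 1 with y
        rw [eval_scaledHermite]
        have hsplit : exp (-(ε ^ 2 * (x - y) ^ 2)) * exp (-δ2 * y ^ 2) * exp (-(α ^ 2 * y ^ 2)) =
            exp (-(ε ^ 2 * x ^ 2)) * exp (-(A * y ^ 2) + 2 * ε ^ 2 * x * y) := by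
          simp only [← exp_add, A]
          ring_nf
        linear_combination α / √π * H n (c * y) * hsplit
    _ = _ := by
      rw [gaussianPairing_scaledHermite hA _ hcA hw, ← hconst, ← hexp, exp_add]
      ring

theorem stmt_10_general (ℓ α : ℝ) (hα : 0 < α)
    (ε β δ2 : ℝ)
    (hε : ε = 1 / (Real.sqrt 2 * ℓ))
    (hβ : β = (1 + (2 * ε / α) ^ 2) ^ ((1 : ℝ) / 4))
    (hδ2 : δ2 = α ^ 2 * (β ^ 2 - 1) / 2)
    (φ : ℕ → ℝ → ℝ)
    (hφ : ∀ n x, φ n x = Real.sqrt (β / (n.factorial : ℝ)) * Real.exp (-δ2 * x ^ 2) *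
      H n (Real.sqrt 2 * α * β * x))
    (lam : ℕ → ℝ)
    (hlam : ∀ n, lam n = Real.sqrt (α ^ 2 / (α ^ 2 + δ2 + ε ^ 2)) *
      (ε ^ 2 / (α ^ 2 + δ2 + ε ^ 2)) ^ n)
    (n : ℕ) (x : ℝ) :
    ∫ y : ℝ, Real.exp (-(x - y) ^ 2 / (2 * ℓ ^ 2)) * φ n y *
        (α / Real.sqrt Real.pi * Real.exp (-(α ^ 2 * y ^ 2))) =
      lam n * φ n x := by
  have hkernel (y : ℝ) : -(x - y) ^ 2 / (2 * ℓ ^ 2) = -(ε ^ 2 * (x - y) ^ 2) := by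
    rw [hε, div_pow, mul_pow, sq_sqrt zero_le_two]
    ring
  have hβ4 : β ^ 4 = 1 + (2 * ε / α) ^ 2 := by
    rw [hβ, ← rpow_natCast, ← rpow_mul (by positivity)]
    norm_num
  have hαβ4 : α ^ 2 * β ^ 4 = α ^ 2 + 4 * ε ^ 2 := by
    rw [hβ4]
    field_simp
    ring
  have hrel : δ2 ^ 2 + α ^ 2 * δ2 = α ^ 2 * ε ^ 2 := by
    rw [hδ2]
    linear_combination α ^ 2 / 4 * hαβ4
  have hc : (√2 * α * β) ^ 2 = 2 * (α ^ 2 + 2 * δ2) := by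
    rw [hδ2, mul_pow, mul_pow, sq_sqrt zero_le_two]
    ring
  calc _ = √(β / n.factorial) * ∫ y, exp (-(ε ^ 2 * (x - y) ^ 2)) *
          (exp (-δ2 * y ^ 2) * H n (√2 * α * β * y)) * (α / √π * exp (-(α ^ 2 * y ^ 2))) := by
        rw [← integral_const_mul]
        congr 1 with y
        rw [hφ, hkernel]
        ring
    _ = lam n * φ n x := by
        rw [integral_gaussianKernel_mul_eigenfunction hα hrel hc, hlam, hφ]
        ring

theorem stmt_10 (ℓ α : ℝ) (hℓ : 0 < ℓ) (hα : 0 < α)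
    (ε β δ2 : ℝ)
    (hε : ε = 1 / (Real.sqrt 2 * ℓ))
    (hβ : β = (1 + (2 * ε / α) ^ 2) ^ ((1 : ℝ) / 4))
    (hδ2 : δ2 = α ^ 2 * (β ^ 2 - 1) / 2)
    (φ : ℕ → ℝ → ℝ)
    (hφ : ∀ n x, φ n x = Real.sqrt (β / (n.factorial : ℝ)) * Real.exp (-δ2 * x ^ 2) *
      H n (Real.sqrt 2 * α * β * x))
    (lam : ℕ → ℝ)
    (hlam : ∀ n, lam n = Real.sqrt (α ^ 2 / (α ^ 2 + δ2 + ε ^ 2)) *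
      (ε ^ 2 / (α ^ 2 + δ2 + ε ^ 2)) ^ n)
    (n : ℕ) (x : ℝ) :
    ∫ y : ℝ, Real.exp (-(x - y) ^ 2 / (2 * ℓ ^ 2)) * φ n y *
        (α / Real.sqrt Real.pi * Real.exp (-(α ^ 2 * y ^ 2))) =
      lam n * φ n x :=
  stmt_10_general ℓ α hα ε β δ2 hε hβ hδ2 φ hφ lam hlam n x
end

section
/- Let d ≥ 1 and for each i = 1, …, d let ℓ_i > 0, α_i > 0 with associated constants ε_i, β_i, δ_i, eigenfunctions φ^i_n, and let x_{i,1}^GH, …, x_{i,N_i}^GH and w_{i,1}^GH, …, w_{i,N_i}^GH be the nodes and weights of the N_i-point Gauss–Hermite rule. Define the scaled nodes x̃_{i,n} = x_{i,n}^GH/(√2·α_i·β_i) and the weights w̃^i_n = (1+2δ_i²)^{−1/2}·w_{i,n}^GH·e^{δ_i²·x̃_{i,n}²}·∑_{m=0}^{⌊(N_i−1)/2⌋} (1/(2^m·m!))·(2α_i²β_i²/(1+2δ_i²) − 1)^m·H_{2m}(x_{i,n}^GH). Then for every multi-index I with I(i) ≤ N_i−1 for all i: ∑_{J : 1 ≤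 J(i) ≤ N_i} (∏_{i=1}^d w̃^i_{J(i)}) · ∏_{i=1}^d φ^i_{I(i)}(x̃_{i,J(i)}) = ∫_{ℝ^d} ∏_{i=1}^d φ^i_{I(i)}(y_i) dμ^d(y). -/
/-!
Both sides factor over the coordinates (the tensor-product rule into a product of one-dimensional
sums, the integral by Fubini), so it suffices to treat `d = 1`. There, after the factors
`exp (± δ² x̃²)` cancel, `w̃ₙ φ_I(x̃ₙ)` is a constant times `wₙ (Q · H_I)(xₙ)`, where
`Q = ∑ₘ sᵐ / (2ᵐ m!) H₂ₘ` with `s = 2α²β² / (1 + 2δ²) - 1` has degree `≤ N - 1`. Gauss–Hermite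
exactness turns the sum into `E[Q H_I]`, which by orthogonality of the Hermite polynomials is
`I! / (2^(I/2) (I/2)!) s^(I/2)` (zero for odd `I`), and this is also `E[H_I(cX)]` for `c² = 1 + s`.
On the other side, the factor `exp (-δ² y²)` turns the standard Gaussian into `√v` times the
Gaussian of variance `v = 1 / (1 + 2δ²)`, so `∫ φ_I dμ` is the same constant times
`E[H_I(√2 α β √v X)]`, and `(√2 α β √v)² = 1 + s`.
-/

open MeasureTheory ProbabilityTheory

/-- The standard Gaussian measure on ℝ. -/
noncomputable def stdGauss : Measure ℝ := gaussianReal 0 1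

open Polynomial Real
open scoped NNReal

instance : IsProbabilityMeasure stdGauss :=
  inferInstanceAs (IsProbabilityMeasure (gaussianReal 0 1))

noncomputable def hermiteReal (n : ℕ) : ℝ[X] := (hermite n).map (Int.castRingHom ℝ)

lemma H_eq_eval_hermiteReal (n : ℕ) (x : ℝ) : H n x = (hermiteReal n).eval x := by
  rw [H, hermiteReal, aeval_def, eval₂_eq_eval_map, algebraMap_int_eq]

lemma hermiteReal_zero : hermiteReal 0 = 1 := by simp [hermiteReal]

lemma hermiteReal_one : hermiteReal 1 = X := by simp [hermiteReal]

lemma hermiteReal_succ (n : ℕ) :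
    hermiteReal (n + 1) = X * hermiteReal n - derivative (hermiteReal n) := by
  simp [hermiteReal, hermite_succ, derivative_map]

lemma natDegree_hermiteReal (n : ℕ) : (hermiteReal n).natDegree = n := by
  rw [hermiteReal, natDegree_map_eq_of_injective Int.cast_injective, natDegree_hermite]

lemma derivative_hermiteReal_succ (n : ℕ) :
    derivative (hermiteReal (n + 1)) = ((n : ℝ) + 1) • hermiteReal n := by
  induction n with
  | zero => simp [hermiteReal_one, hermiteReal_zero]
  | succ n ih =>
    rw [hermiteReal_succ (n + 1), derivative_sub, derivative_mul, derivative_X, one_mul, ih,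
      hermiteReal_succ n, derivative_smul]
    simp only [smul_eq_C_mul, Nat.cast_succ, C_add, C_1]
    ring

lemma hermiteReal_succ_succ (n : ℕ) :
    hermiteReal (n + 2) = X * hermiteReal (n + 1) - ((n : ℝ) + 1) • hermiteReal n := by
  rw [hermiteReal_succ (n + 1), derivative_hermiteReal_succ]

lemma iterate_derivative_hermiteReal {j k : ℕ} (h : j ≤ k) :
    derivative^[j] (hermiteReal k) = (k.descFactorial j : ℝ) • hermiteReal (k - j) := by
  induction j with
  | zero => simp
  | succ j ih =>
    obtain ⟨m, hm⟩ : ∃ m, k - j = m + 1 := ⟨k - j - 1, by omega⟩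
    rw [Function.iterate_succ_apply', ih (by omega), derivative_smul, hm,
      derivative_hermiteReal_succ, smul_smul, show k - (j + 1) = m by omega,
      Nat.descFactorial_succ, hm]
    push_cast
    ring_nf

lemma gaussianPDFReal_zero_one (x : ℝ) :
    gaussianPDFReal 0 1 x = (√(2 * π))⁻¹ * rexp (-x ^ 2 / 2) := by
  simp [gaussianPDFReal_def]

lemma hasDerivAt_gaussianPDFReal_zero_one (x : ℝ) :
    HasDerivAt (gaussianPDFReal 0 1) (-x * gaussianPDFReal 0 1 x) x := by
  have hexp : HasDerivAt (fun y : ℝ => -y ^ 2 / 2) (-x) x :=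
    ((hasDerivAt_pow 2 x).neg.div_const 2).congr_deriv (by ring)
  rw [show gaussianPDFReal 0 1 = _ from funext gaussianPDFReal_zero_one]
  exact (hexp.exp.const_mul _).congr_deriv (by ring)

lemma integral_stdGauss (f : ℝ → ℝ) :
    ∫ x, f x ∂stdGauss = ∫ x, gaussianPDFReal 0 1 x * f x :=
  integral_gaussianReal_eq_integral_smul one_ne_zero

lemma integrable_stdGauss_iff {f : ℝ → ℝ} :
    Integrable f stdGauss ↔ Integrable (fun x => gaussianPDFReal 0 1 x * f x) := by
  rw [stdGauss, gaussianReal_of_var_ne_zero 0 one_ne_zero, gaussianPDF_def,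
    integrable_withDensity_iff_integrable_smul' (by fun_prop)
      (ae_of_all _ fun _ => ENNReal.ofReal_lt_top)]
  simp [ENNReal.toReal_ofReal (gaussianPDFReal_nonneg 0 1 _)]

lemma integrable_eval_stdGauss (p : ℝ[X]) : Integrable (fun x => p.eval x) stdGauss := by
  have hpow (k : ℕ) : Integrable (fun x : ℝ => x ^ k) stdGauss :=
    (memLp_id_gaussianReal' k (ENNReal.natCast_ne_top k)).integrable_norm_pow'.mono (by fun_prop)
      (ae_of_all _ fun x => by simp)
  induction p using Polynomial.induction_on' with
  | add p q hp hq => simp only [eval_add]; exact hp.add hq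
  | monomial n a => simpa using (hpow n).const_mul a

noncomputable def gaussianExpectation : ℝ[X] →ₗ[ℝ] ℝ where
  toFun p := ∫ x, p.eval x ∂stdGauss
  map_add' p q := by
    simp only [eval_add]
    exact integral_add (integrable_eval_stdGauss p) (integrable_eval_stdGauss q)
  map_smul' c p := by
    simp only [eval_smul, smul_eq_mul, RingHom.id_apply]
    exact integral_const_mul c _

lemma gaussianExpectation_apply (p : ℝ[X]) :
    gaussianExpectation p = ∫ x, p.eval x ∂stdGauss := rfl

lemma gaussianExpectation_one : gaussianExpectation 1 = 1 := by
  simp [gaussianExpectation_apply]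

/-- Stein's identity: integrate `(ρ p)' = ρ (p' - X p)` over `ℝ`, where `ρ' = -x ρ` for the
Gaussian density `ρ`. -/
lemma gaussianExpectation_X_mul (p : ℝ[X]) :
    gaussianExpectation (X * p) = gaussianExpectation (derivative p) := by
  have hint (q : ℝ[X]) : Integrable fun x => gaussianPDFReal 0 1 x * q.eval x :=
    integrable_stdGauss_iff.mp (integrable_eval_stdGauss q)
  have hderiv (x : ℝ) : HasDerivAt (fun y => gaussianPDFReal 0 1 y * p.eval y)
      (gaussianPDFReal 0 1 x * (derivative p).eval x
        - gaussianPDFReal 0 1 x * (X * p).eval x) x :=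
    ((hasDerivAt_gaussianPDFReal_zero_one x).mul (p.hasDerivAt x)).congr_deriv
      (by simp only [eval_mul, eval_X]; ring)
  have hzero := integral_eq_zero_of_hasDerivAt_of_integrable hderiv
    ((hint _).sub (hint _)) (hint p)
  rw [integral_sub (hint _) (hint _), sub_eq_zero] at hzero
  rw [gaussianExpectation_apply, gaussianExpectation_apply, integral_stdGauss, integral_stdGauss,
    hzero]

lemma gaussianExpectation_hermiteReal_mul (n : ℕ) (p : ℝ[X]) :
    gaussianExpectation (hermiteReal n * p) = gaussianExpectation (derivative^[n] p) := by
  induction n generalizing p with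
  | zero => simp [hermiteReal_zero]
  | succ n ih =>
    have hsplit : hermiteReal (n + 1) * p = X * (hermiteReal n * p)
        - derivative (hermiteReal n * p) + hermiteReal n * derivative p := by
      rw [hermiteReal_succ, derivative_mul]; ring
    rw [hsplit, map_add, map_sub, gaussianExpectation_X_mul, sub_self, zero_add, ih,
      Function.iterate_succ_apply]

lemma gaussianExpectation_hermiteReal (n : ℕ) :
    gaussianExpectation (hermiteReal n) = if n = 0 then 1 else 0 := by
  have h := gaussianExpectation_hermiteReal_mul n 1
  rw [mul_one] at h
  rw [h]
  rcases Nat.eq_zero_or_pos n with rfl | hn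
  · simp [gaussianExpectation_one]
  · rw [iterate_derivative_eq_zero (by simpa using hn), map_zero, if_neg hn.ne']

lemma gaussianExpectation_hermiteReal_mul_hermiteReal (j k : ℕ) :
    gaussianExpectation (hermiteReal j * hermiteReal k)
      = if j = k then (k.factorial : ℝ) else 0 := by
  rw [gaussianExpectation_hermiteReal_mul]
  rcases le_or_gt j k with hjk | hkj
  · rw [iterate_derivative_hermiteReal hjk, map_smul, gaussianExpectation_hermiteReal,
      smul_eq_mul]
    rcases hjk.eq_or_lt with rfl | hlt
    · simp [Nat.descFactorial_self]
    · rw [if_neg (by omega), if_neg hlt.ne, mul_zero]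
  · rw [iterate_derivative_eq_zero (by rwa [natDegree_hermiteReal]), map_zero, if_neg hkj.ne']

noncomputable def hermiteMoment (s : ℝ) : ℕ → ℝ
  | 0 => 1
  | 1 => 0
  | n + 2 => (n + 1) * s * hermiteMoment s n

lemma hermiteMoment_two_mul (s : ℝ) (k : ℕ) :
    hermiteMoment s (2 * k) = (2 * k).factorial / (2 ^ k * k.factorial) * s ^ k := by
  induction k with
  | zero => simp [hermiteMoment]
  | succ k ih =>
    rw [show 2 * (k + 1) = 2 * k + 2 by ring, hermiteMoment, ih]
    simp only [Nat.factorial_succ]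
    push_cast
    field_simp
    ring

lemma hermiteMoment_two_mul_add_one (s : ℝ) (k : ℕ) : hermiteMoment s (2 * k + 1) = 0 := by
  induction k with
  | zero => rfl
  | succ k ih => rw [show 2 * (k + 1) + 1 = 2 * k + 1 + 2 by ring, hermiteMoment, ih, mul_zero]

/-- Both sides satisfy `g (n + 2) = (n + 1) (c² - 1) g n`, by the three-term recurrence and
Stein's identity. -/
lemma gaussianExpectation_hermiteReal_comp (c : ℝ) (n : ℕ) :
    gaussianExpectation ((hermiteReal n).comp (C c * X)) = hermiteMoment (c ^ 2 - 1) n := by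
  induction n using Nat.twoStepInduction with
  | zero => simp [hermiteReal_zero, gaussianExpectation_one, hermiteMoment]
  | one =>
    have h := gaussianExpectation_X_mul 1
    rw [mul_one, derivative_one, map_zero] at h
    simp [hermiteReal_one, hermiteMoment, ← smul_eq_C_mul, h]
  | more n ih _ =>
    have hcomp : (hermiteReal (n + 2)).comp (C c * X)
        = c • (X * (hermiteReal (n + 1)).comp (C c * X))
          - ((n : ℝ) + 1) • (hermiteReal n).comp (C c * X) := by
      rw [hermiteReal_succ_succ, sub_comp, mul_comp, X_comp, smul_comp, smul_eq_C_mul c]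
      ring
    have hderiv : derivative ((hermiteReal (n + 1)).comp (C c * X))
        = (c * ((n : ℝ) + 1)) • (hermiteReal n).comp (C c * X) := by
      rw [derivative_comp, derivative_hermiteReal_succ, smul_comp, mul_smul]
      simp [smul_eq_C_mul]
    rw [hcomp, map_sub, map_smul, map_smul, gaussianExpectation_X_mul, hderiv, map_smul, ih,
      hermiteMoment]
    simp only [smul_eq_mul]
    ring

noncomputable def hermiteSeries (s : ℝ) (M : ℕ) : ℝ[X] :=
  ∑ m ∈ Finset.range M, C (1 / (2 ^ m * (m.factorial : ℝ)) * s ^ m) * hermiteReal (2 * m)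

lemma eval_hermiteSeries (s : ℝ) (M : ℕ) (x : ℝ) :
    (hermiteSeries s M).eval x
      = ∑ m ∈ Finset.range M, 1 / (2 ^ m * (m.factorial : ℝ)) * s ^ m * H (2 * m) x := by
  simp [hermiteSeries, eval_finsetSum, H_eq_eval_hermiteReal]

lemma natDegree_hermiteSeries_le (s : ℝ) (M : ℕ) :
    (hermiteSeries s M).natDegree ≤ 2 * (M - 1) := by
  refine natDegree_sum_le_of_forall_le _ _ fun m hm => natDegree_C_mul_le _ _ |>.trans ?_
  rw [natDegree_hermiteReal]
  have := Finset.mem_range.mp hm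
  omega

/-- Orthogonality picks out the single term `2m = I` of the series. -/
lemma gaussianExpectation_hermiteSeries_mul_hermiteReal (s : ℝ) {M I : ℕ} (hI : I < 2 * M) :
    gaussianExpectation (hermiteSeries s M * hermiteReal I) = hermiteMoment s I := by
  simp_rw [hermiteSeries, Finset.sum_mul, mul_assoc, ← smul_eq_C_mul, map_sum, map_smul,
    gaussianExpectation_hermiteReal_mul_hermiteReal, smul_eq_mul, mul_ite, mul_zero]
  obtain ⟨k, rfl | rfl⟩ := Nat.even_or_odd' I
  · simp_rw [mul_right_inj' two_ne_zero]
    rw [Finset.sum_ite_eq' (Finset.range M) k, if_pos (Finset.mem_range.mpr (by omega)),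
      hermiteMoment_two_mul]
    ring
  · rw [hermiteMoment_two_mul_add_one]
    exact Finset.sum_eq_zero fun m _ => if_neg (by omega)

/-- Multiplying the standard Gaussian density by `exp (-d x²)` gives `√v` times the centred
Gaussian density of variance `v = 1 / (1 + 2d)`, the law of `√v • X`. -/
lemma integral_exp_neg_mul_sq_mul_stdGauss {d : ℝ} (hd : 0 < 1 + 2 * d) {f : ℝ → ℝ}
    (hf : Continuous f) :
    ∫ x, rexp (-d * x ^ 2) * f x ∂stdGauss
      = √(1 / (1 + 2 * d)) * ∫ u, f (√(1 / (1 + 2 * d)) * u) ∂stdGauss := by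
  set v : ℝ := 1 / (1 + 2 * d) with hv_def
  have hv : 0 < v := by positivity
  set w : ℝ≥0 := ⟨v, hv.le⟩
  have hpdf (x : ℝ) :
      gaussianPDFReal 0 1 x * rexp (-d * x ^ 2) = √v * gaussianPDFReal 0 w x := by
    have hw : (w : ℝ) = v := rfl
    rw [gaussianPDFReal_zero_one, gaussianPDFReal_def, hw,
      Real.sqrt_mul (by positivity : (0 : ℝ) ≤ 2 * π) v, mul_assoc, ← Real.exp_add]
    have : -x ^ 2 / 2 + -d * x ^ 2 = -(x - 0) ^ 2 / (2 * v) := by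
      rw [hv_def]; field_simp; ring
    rw [this]
    field_simp
  have hmap : stdGauss.map (√v * ·) = gaussianReal 0 w := by
    rw [stdGauss, gaussianReal_map_const_mul, mul_zero, mul_one]
    congr
    simp [Real.sq_sqrt hv.le]
  calc ∫ x, rexp (-d * x ^ 2) * f x ∂stdGauss
      = ∫ x, √v * (gaussianPDFReal 0 w x * f x) := by
        rw [integral_stdGauss]
        congr 1 with x
        rw [← mul_assoc, hpdf, mul_assoc]
    _ = √v * ∫ x, f x ∂(gaussianReal 0 w) := by
        rw [integral_const_mul, integral_gaussianReal_eq_integral_smul (ne_of_gt hv)]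
        rfl
    _ = √v * ∫ u, f (√v * u) ∂stdGauss := by
        rw [← hmap, integral_map (by fun_prop) hf.aestronglyMeasurable]

lemma continuous_H (n : ℕ) : Continuous (H n) := by
  simpa only [← funext (H_eq_eval_hermiteReal n)] using (hermiteReal n).continuous

lemma sum_mul_eval_hermiteSeries_mul_hermiteReal {N : ℕ} (x w : Fin N → ℝ)
    (hexact : ∀ p : ℝ[X], p.natDegree ≤ 2 * N - 1 →
      ∑ n, w n * p.eval (x n) = ∫ t, p.eval t ∂stdGauss)
    {I : ℕ} (hI : I < N) (c : ℝ) :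
    ∑ n, w n * (hermiteSeries (c ^ 2 - 1) ((N - 1) / 2 + 1) * hermiteReal I).eval (x n)
      = ∫ t, H I (c * t) ∂stdGauss := by
  have hdeg : (hermiteSeries (c ^ 2 - 1) ((N - 1) / 2 + 1) * hermiteReal I).natDegree
      ≤ 2 * N - 1 := by
    have := natDegree_hermiteSeries_le (c ^ 2 - 1) ((N - 1) / 2 + 1)
    refine natDegree_mul_le.trans ?_
    rw [natDegree_hermiteReal]
    omega
  rw [hexact _ hdeg, ← gaussianExpectation_apply,
    gaussianExpectation_hermiteSeries_mul_hermiteReal _ (by omega),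
    ← gaussianExpectation_hermiteReal_comp, gaussianExpectation_apply]
  simp [H_eq_eval_hermiteReal]

theorem sum_weight_mul_eigenfunction_eq_integral {α β δ2 : ℝ} (hα : α ≠ 0) (hβ : β ≠ 0)
    (hδ2 : 0 < 1 + 2 * δ2) (φ : ℕ → ℝ → ℝ)
    (hφ : ∀ n x,
      φ n x = √(β / (n.factorial : ℝ)) * rexp (-δ2 * x ^ 2) * H n (√2 * α * β * x))
    {N : ℕ} (xGH wGH : Fin N → ℝ)
    (hexact : ∀ p : ℝ[X], p.natDegree ≤ 2 * N - 1 →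
      ∑ n, wGH n * p.eval (xGH n) = ∫ t, p.eval t ∂stdGauss)
    (xt : Fin N → ℝ) (hxt : ∀ n, xt n = xGH n / (√2 * α * β))
    (wt : Fin N → ℝ)
    (hwt : ∀ n, wt n = √(1 / (1 + 2 * δ2)) * wGH n * rexp (δ2 * xt n ^ 2) *
      ∑ m ∈ Finset.range ((N - 1) / 2 + 1),
        (1 / (2 ^ m * (m.factorial : ℝ))) * (2 * α ^ 2 * β ^ 2 / (1 + 2 * δ2) - 1) ^ m *
          H (2 * m) (xGH n))
    {I : ℕ} (hI : I < N) :
    ∑ n, wt n * φ I (xt n) = ∫ y, φ I y ∂stdGauss := by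
  set a := √2 * α * β
  set v := 1 / (1 + 2 * δ2)
  have ha : a ≠ 0 := mul_ne_zero (mul_ne_zero (by positivity) hα) hβ
  have hc : (a * √v) ^ 2 - 1 = 2 * α ^ 2 * β ^ 2 / (1 + 2 * δ2) - 1 := by
    rw [mul_pow, Real.sq_sqrt (by positivity), mul_pow, mul_pow, Real.sq_sqrt zero_le_two]
    ring
  have hterm (n : Fin N) : wt n * φ I (xt n) = √(β / (I.factorial : ℝ)) * (√v * (wGH n *
      (hermiteSeries ((a * √v) ^ 2 - 1) ((N - 1) / 2 + 1) * hermiteReal I).eval (xGH n))) := by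
    rw [hwt, hφ, hc, eval_mul, eval_hermiteSeries, ← H_eq_eval_hermiteReal, hxt n,
      mul_div_cancel₀ _ ha, ← hxt n, neg_mul, Real.exp_neg]
    field_simp
  calc ∑ n, wt n * φ I (xt n)
      = √(β / (I.factorial : ℝ)) * (√v * ∑ n, wGH n *
          (hermiteSeries ((a * √v) ^ 2 - 1) ((N - 1) / 2 + 1) * hermiteReal I).eval (xGH n)) := by
        simp_rw [hterm, Finset.mul_sum]
    _ = √(β / (I.factorial : ℝ)) * (√v * ∫ t, H I (a * (√v * t)) ∂stdGauss) := by
        rw [sum_mul_eval_hermiteSeries_mul_hermiteReal xGH wGH hexact hI]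
        simp_rw [mul_assoc]
    _ = √(β / (I.factorial : ℝ)) * ∫ y, rexp (-δ2 * y ^ 2) * H I (a * y) ∂stdGauss := by
        rw [integral_exp_neg_mul_sq_mul_stdGauss hδ2 (f := fun y => H I (a * y))
          ((continuous_H I).comp (continuous_const_mul a))]
    _ = ∫ y, φ I y ∂stdGauss := by
        rw [← integral_const_mul]
        simp_rw [hφ, mul_assoc]

theorem stmt_19_general (d : ℕ)
    (α : Fin d → ℝ) (hα : ∀ i, 0 < α i)
    (ε β δ2 : Fin d → ℝ)
    (hβ : ∀ i, β i = (1 + (2 * ε i / α i) ^ 2) ^ ((1 : ℝ) / 4))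
    (hδ2 : ∀ i, δ2 i = (α i) ^ 2 * ((β i) ^ 2 - 1) / 2)
    (φ : Fin d → ℕ → ℝ → ℝ)
    (hφ : ∀ i n x, φ i n x = Real.sqrt (β i / (n.factorial : ℝ)) *
      Real.exp (-δ2 i * x ^ 2) * H n (Real.sqrt 2 * α i * β i * x))
    (N : Fin d → ℕ)
    (xGH : (i : Fin d) → Fin (N i) → ℝ) (wGH : (i : Fin d) → Fin (N i) → ℝ)
    (hexact : ∀ i, ∀ p : Polynomial ℝ, p.natDegree ≤ 2 * N i - 1 →
      ∑ n, wGH i n * p.eval (xGH i n) = ∫ t, p.eval t ∂stdGauss)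
    (xt : (i : Fin d) → Fin (N i) → ℝ)
    (hxt : ∀ i n, xt i n = xGH i n / (Real.sqrt 2 * α i * β i))
    (wt : (i : Fin d) → Fin (N i) → ℝ)
    (hwt : ∀ i n, wt i n = Real.sqrt (1 / (1 + 2 * δ2 i)) * wGH i n *
      Real.exp (δ2 i * xt i n ^ 2) *
      ∑ m ∈ Finset.range ((N i - 1) / 2 + 1),
        (1 / (2 ^ m * (m.factorial : ℝ))) *
          (2 * (α i) ^ 2 * (β i) ^ 2 / (1 + 2 * δ2 i) - 1) ^ m * H (2 * m) (xGH i n))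
    (I : Fin d → ℕ) (hI : ∀ i, I i < N i) :
    ∑ J : (i : Fin d) → Fin (N i), (∏ i, wt i (J i)) * ∏ i, φ i (I i) (xt i (J i)) =
      ∫ y : Fin d → ℝ, ∏ i, φ i (I i) (y i) ∂(Measure.pi fun _ => stdGauss) := by
  have hβ_one_le (i : Fin d) : 1 ≤ β i :=
    hβ i ▸ Real.one_le_rpow (le_add_of_nonneg_right (sq_nonneg _)) (by norm_num)
  have hδ2_pos (i : Fin d) : 0 < 1 + 2 * δ2 i := by
    have hβ_sq : 0 ≤ β i ^ 2 - 1 := by nlinarith [hβ_one_le i]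
    rw [hδ2]
    nlinarith [mul_nonneg (sq_nonneg (α i)) hβ_sq]
  calc ∑ J : (i : Fin d) → Fin (N i), (∏ i, wt i (J i)) * ∏ i, φ i (I i) (xt i (J i))
      = ∏ i, ∑ j, wt i j * φ i (I i) (xt i j) := by
        simp_rw [← Finset.prod_mul_distrib]
        exact (Fintype.prod_sum fun i j => wt i j * φ i (I i) (xt i j)).symm
    _ = ∏ i, ∫ t, φ i (I i) t ∂stdGauss := Finset.prod_congr rfl fun i _ =>
        sum_weight_mul_eigenfunction_eq_integral (hα i).ne' (by linarith [hβ_one_le i])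
          (hδ2_pos i) (φ i) (hφ i) (xGH i) (wGH i) (hexact i) (xt i) (hxt i) (wt i) (hwt i)
          (hI i)
    _ = ∫ y : Fin d → ℝ, ∏ i, φ i (I i) (y i) ∂(Measure.pi fun _ => stdGauss) :=
        (integral_fintype_prod_eq_prod _).symm

theorem stmt_19 (d : ℕ) (hd : 1 ≤ d)
    (ℓ α : Fin d → ℝ) (hℓ : ∀ i, 0 < ℓ i) (hα : ∀ i, 0 < α i)
    (ε β δ2 : Fin d → ℝ)
    (hε : ∀ i, ε i = 1 / (Real.sqrt 2 * ℓ i))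
    (hβ : ∀ i, β i = (1 + (2 * ε i / α i) ^ 2) ^ ((1 : ℝ) / 4))
    (hδ2 : ∀ i, δ2 i = (α i) ^ 2 * ((β i) ^ 2 - 1) / 2)
    (φ : Fin d → ℕ → ℝ → ℝ)
    (hφ : ∀ i n x, φ i n x = Real.sqrt (β i / (n.factorial : ℝ)) *
      Real.exp (-δ2 i * x ^ 2) * H n (Real.sqrt 2 * α i * β i * x))
    (N : Fin d → ℕ) (hN : ∀ i, 1 ≤ N i)
    (xGH : (i : Fin d) → Fin (N i) → ℝ) (wGH : (i : Fin d) → Fin (N i) → ℝ)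
    (hinj : ∀ i, Function.Injective (xGH i))
    (hroot : ∀ i n, H (N i) (xGH i n) = 0)
    (hexact : ∀ i, ∀ p : Polynomial ℝ, p.natDegree ≤ 2 * N i - 1 →
      ∑ n, wGH i n * p.eval (xGH i n) = ∫ t, p.eval t ∂stdGauss)
    (xt : (i : Fin d) → Fin (N i) → ℝ)
    (hxt : ∀ i n, xt i n = xGH i n / (Real.sqrt 2 * α i * β i))
    (wt : (i : Fin d) → Fin (N i) → ℝ)
    (hwt : ∀ i n, wt i n = Real.sqrt (1 / (1 + 2 * δ2 i)) * wGH i n *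
      Real.exp (δ2 i * xt i n ^ 2) *
      ∑ m ∈ Finset.range ((N i - 1) / 2 + 1),
        (1 / (2 ^ m * (m.factorial : ℝ))) *
          (2 * (α i) ^ 2 * (β i) ^ 2 / (1 + 2 * δ2 i) - 1) ^ m * H (2 * m) (xGH i n))
    (I : Fin d → ℕ) (hI : ∀ i, I i < N i) :
    ∑ J : (i : Fin d) → Fin (N i), (∏ i, wt i (J i)) * ∏ i, φ i (I i) (xt i (J i)) =
      ∫ y : Fin d → ℝ, ∏ i, φ i (I i) (y i) ∂(Measure.pi fun _ => stdGauss) :=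
  stmt_19_general d α hα ε β δ2 hβ hδ2 φ hφ N xGH wGH hexact xt hxt wt hwt I hI
end
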